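/- arXiv:1604.00793 — 3 statements merged into one kernel-verified Lean document; each statement's English description precedes it below -/
import Mathlib

section
/- Let m ≥ 0 and let U, V, Z be three Banach spaces. The space C^s_m(U, L(Z,V)) of maps f : U → L(Z,V) such that f(·)z ∈ C_m(U,V) for every z ∈ Z is a Banach space when endowed with the norm |f|_{C^s_m} := sup_{x∈U} ‖f(x)‖_{L(Z,V)}/(1+|x|^m). (In particular, this supremum is finite for every such f.) -/
open Set

/-- `f ∈ C_m(U,V)`: `f` is continuous and has at most polynomial growth of order `m`,
i.e. `sup_x ‖f x‖/(1+‖x‖^m) < ∞`. -/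
def MemCm {U V : Type*} [NormedAddCommGroup U] [NormedAddCommGroup V]
    (m : ℝ) (f : U → V) : Prop :=
  Continuous f ∧ ∃ C : ℝ, ∀ x : U, ‖f x‖ ≤ C * (1 + ‖x‖ ^ m)

/-- `F ∈ C^s_m(U, L(Z,V))`: for every `z ∈ Z`, the map `x ↦ F x z` belongs to `C_m(U,V)`. -/
def MemCsm {U Z V : Type*} [NormedAddCommGroup U]
    [NormedAddCommGroup Z] [NormedSpace ℝ Z]
    [NormedAddCommGroup V] [NormedSpace ℝ V] (m : ℝ) (F : U → Z →L[ℝ] V) : Prop :=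
  ∀ z : Z, MemCm m fun x => F x z

open Filter Topology

/-!
For `m ≥ 0` the weight `w x = 1 + ‖x‖ ^ m` is positive and continuous. Finiteness of the
`C^s_m`-norm is the uniform boundedness principle applied to the family `w(x)⁻¹ • F x`, which is
pointwise bounded on `Z` by the growth bounds of the maps `x ↦ F x z`. For completeness, a Cauchy
sequence for the weighted norm converges pointwise, hence in the weighted norm; since `w` is locally
bounded, weighted convergence is locally uniform, so continuity of each `x ↦ F x z` passes to the
limit, and the growth bound of the limit is that of one term plus the weight.
-/

lemma norm_inv_smul_of_pos {E : Type*} [SeminormedAddCommGroup E] [NormedSpace ℝ E] {c : ℝ}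
    (hc : 0 < c) (v : E) : ‖c⁻¹ • v‖ = ‖v‖ / c := by
  rw [norm_smul, norm_inv, Real.norm_of_nonneg hc.le, inv_mul_eq_div]

lemma one_add_rpow_norm_pos {E : Type*} [SeminormedAddCommGroup E] (m : ℝ) (x : E) :
    0 < 1 + ‖x‖ ^ m := by
  positivity

lemma continuous_one_add_rpow_norm {E : Type*} [SeminormedAddCommGroup E] {m : ℝ} (hm : 0 ≤ m) :
    Continuous fun x : E => 1 + ‖x‖ ^ m :=
  continuous_const.add (continuous_norm.rpow_const fun _ => Or.inr hm)

section Weighted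

variable {α β : Type*} [SeminormedAddCommGroup β]

def UniformCauchySeqWeighted (w : α → ℝ) (F : ℕ → α → β) : Prop :=
  ∀ ε : ℝ, 0 < ε → ∃ N : ℕ, ∀ p ≥ N, ∀ q ≥ N, ∀ x, ‖F p x - F q x‖ ≤ ε * w x

def TendstoUniformlyWeighted (w : α → ℝ) (F : ℕ → α → β) (G : α → β) : Prop :=
  ∀ ε : ℝ, 0 < ε → ∃ N : ℕ, ∀ n ≥ N, ∀ x, ‖F n x - G x‖ ≤ ε * w x

variable {w : α → ℝ} {F : ℕ → α → β} {G : α → β}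

lemma UniformCauchySeqWeighted.cauchySeq (hw : ∀ x, 0 < w x) (h : UniformCauchySeqWeighted w F)
    (x : α) : CauchySeq fun n => F n x := by
  rw [Metric.cauchySeq_iff']
  intro ε hε
  have hwx := hw x
  obtain ⟨N, hN⟩ := h (ε / (2 * w x)) (by positivity)
  refine ⟨N, fun n hn => ?_⟩
  rw [dist_eq_norm]
  calc ‖F n x - F N x‖ ≤ ε / (2 * w x) * w x := hN n hn N le_rfl x
    _ = ε / 2 := by field_simp
    _ < ε := half_lt_self hε

lemma UniformCauchySeqWeighted.tendstoUniformlyWeighted (h : UniformCauchySeqWeighted w F)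
    (hG : ∀ x, Tendsto (fun n => F n x) atTop (𝓝 (G x))) : TendstoUniformlyWeighted w F G := by
  intro ε hε
  obtain ⟨N, hN⟩ := h ε hε
  exact ⟨N, fun n hn x => le_of_tendsto (tendsto_const_nhds.sub (hG x)).norm
    (eventually_atTop.2 ⟨N, fun q hq => hN n hn q hq x⟩)⟩

lemma UniformCauchySeqWeighted.exists_tendstoUniformlyWeighted [CompleteSpace β]
    (hw : ∀ x, 0 < w x) (h : UniformCauchySeqWeighted w F) :
    ∃ G, TendstoUniformlyWeighted w F G := by
  choose G hG using fun x => cauchySeq_tendsto_of_complete (h.cauchySeq hw x)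
  exact ⟨G, h.tendstoUniformlyWeighted hG⟩

lemma TendstoUniformlyWeighted.tendstoLocallyUniformly [TopologicalSpace α] (hw : Continuous w)
    (h : TendstoUniformlyWeighted w F G) : TendstoLocallyUniformly F G atTop := by
  rw [Metric.tendstoLocallyUniformly_iff]
  intro ε hε x
  set K := |w x| + 1
  have hK : 0 < K := by positivity
  obtain ⟨N, hN⟩ := h (ε / (2 * K)) (by positivity)
  have hnear : {y | w y < K} ∈ 𝓝 x :=
    hw.continuousAt.eventually_lt continuousAt_const (by linarith [le_abs_self (w x)])
  refine ⟨_, hnear, eventually_atTop.2 ⟨N, fun n hn y hy => ?_⟩⟩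
  rw [dist_eq_norm']
  calc ‖F n y - G y‖ ≤ ε / (2 * K) * w y := hN n hn y
    _ ≤ ε / (2 * K) * K := by gcongr; exact le_of_lt hy
    _ = ε / 2 := by field_simp
    _ < ε := half_lt_self hε

lemma TendstoUniformlyWeighted.apply {Z : Type*} [SeminormedAddCommGroup Z] [NormedSpace ℝ Z]
    [NormedSpace ℝ β] {F : ℕ → α → Z →L[ℝ] β} {G : α → Z →L[ℝ] β} (hw : ∀ x, 0 ≤ w x)
    (h : TendstoUniformlyWeighted w F G) (z : Z) :
    TendstoUniformlyWeighted w (fun n x => F n x z) (fun x => G x z) := by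
  intro ε hε
  obtain ⟨N, hN⟩ := h (ε / (‖z‖ + 1)) (by positivity)
  refine ⟨N, fun n hn x => ?_⟩
  have hwx := hw x
  calc ‖F n x z - G x z‖ = ‖(F n x - G x) z‖ := by rw [sub_apply]
    _ ≤ ‖F n x - G x‖ * ‖z‖ := (F n x - G x).le_opNorm z
    _ ≤ ε / (‖z‖ + 1) * w x * (‖z‖ + 1) := by gcongr; exacts [hN n hn x, by linarith]
    _ = ε * w x := by field_simp

end Weighted

section GrowthClasses

variable {U Z V : Type*} [NormedAddCommGroup U] [NormedAddCommGroup V] {m : ℝ}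

lemma MemCm.of_tendstoUniformlyWeighted {f : ℕ → U → V} {g : U → V} (hm : 0 ≤ m)
    (hf : ∀ n, MemCm m (f n)) (h : TendstoUniformlyWeighted (fun x => 1 + ‖x‖ ^ m) f g) :
    MemCm m g := by
  refine ⟨(h.tendstoLocallyUniformly (continuous_one_add_rpow_norm hm)).continuous
    (Eventually.of_forall fun n => (hf n).1).frequently, ?_⟩
  obtain ⟨N, hN⟩ := h 1 one_pos
  obtain ⟨-, C, hC⟩ := hf N
  refine ⟨C + 1, fun x => ?_⟩
  calc ‖g x‖ ≤ ‖f N x‖ + ‖f N x - g x‖ := norm_le_norm_add_norm_sub _ _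
    _ ≤ C * (1 + ‖x‖ ^ m) + 1 * (1 + ‖x‖ ^ m) := add_le_add (hC x) (hN N le_rfl x)
    _ = (C + 1) * (1 + ‖x‖ ^ m) := by ring

variable [NormedAddCommGroup Z] [NormedSpace ℝ Z] [NormedSpace ℝ V]

lemma MemCsm.of_tendstoUniformlyWeighted {F : ℕ → U → Z →L[ℝ] V} {G : U → Z →L[ℝ] V}
    (hm : 0 ≤ m) (hF : ∀ n, MemCsm m (F n))
    (h : TendstoUniformlyWeighted (fun x => 1 + ‖x‖ ^ m) F G) : MemCsm m G := fun z =>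
  MemCm.of_tendstoUniformlyWeighted hm (fun n => hF n z)
    (h.apply (fun x => (one_add_rpow_norm_pos m x).le) z)

lemma MemCsm.bddAbove_norm_div [CompleteSpace Z] {F : U → Z →L[ℝ] V} (hF : MemCsm m F) :
    BddAbove (range fun x => ‖F x‖ / (1 + ‖x‖ ^ m)) := by
  have hw := one_add_rpow_norm_pos (E := U) m
  obtain ⟨C, hC⟩ := banach_steinhaus (g := fun x => (1 + ‖x‖ ^ m)⁻¹ • F x) fun z => by
    obtain ⟨-, C, hC⟩ := hF z
    refine ⟨C, fun x => ?_⟩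
    rw [smul_apply, norm_inv_smul_of_pos (hw x), div_le_iff₀ (hw x)]
    exact hC x
  refine ⟨C, forall_mem_range.2 fun x => ?_⟩
  rw [← norm_inv_smul_of_pos (hw x)]
  exact hC x

end GrowthClasses

theorem stmt0_general {U Z V : Type*}
    [NormedAddCommGroup U]
    [NormedAddCommGroup Z] [NormedSpace ℝ Z] [CompleteSpace Z]
    [NormedAddCommGroup V] [NormedSpace ℝ V] [CompleteSpace V]
    (m : ℝ) (hm : 0 ≤ m) :
    (∀ F : U → Z →L[ℝ] V, MemCsm m F →
      BddAbove (Set.range fun x : U => ‖F x‖ / (1 + ‖x‖ ^ m))) ∧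
    (∀ F : ℕ → U → Z →L[ℝ] V, (∀ n, MemCsm m (F n)) →
      (∀ ε : ℝ, 0 < ε → ∃ N : ℕ, ∀ p ≥ N, ∀ q ≥ N, ∀ x : U,
        ‖F p x - F q x‖ ≤ ε * (1 + ‖x‖ ^ m)) →
      ∃ Flim : U → Z →L[ℝ] V, MemCsm m Flim ∧
        ∀ ε : ℝ, 0 < ε → ∃ N : ℕ, ∀ n ≥ N, ∀ x : U,
          ‖F n x - Flim x‖ ≤ ε * (1 + ‖x‖ ^ m)) := by
  refine ⟨fun F hF => hF.bddAbove_norm_div, fun F hF hCauchy => ?_⟩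
  obtain ⟨G, hG⟩ := UniformCauchySeqWeighted.exists_tendstoUniformlyWeighted
    (one_add_rpow_norm_pos m) hCauchy
  exact ⟨G, MemCsm.of_tendstoUniformlyWeighted hm hF hG, hG⟩

/-- for Banach spaces `U, V, Z` and `m ≥ 0`, the space
`C^s_m(U, L(Z,V))` is a Banach space with the norm `sup_x ‖F x‖_{L(Z,V)}/(1+‖x‖^m)`.
In particular this supremum is finite for every member, and the space is complete:
every Cauchy sequence (for this norm) converges in this norm to a member of the space. -/
theorem stmt0 {U Z V : Type*}
    [NormedAddCommGroup U] [NormedSpace ℝ U] [CompleteSpace U]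
    [NormedAddCommGroup Z] [NormedSpace ℝ Z] [CompleteSpace Z]
    [NormedAddCommGroup V] [NormedSpace ℝ V] [CompleteSpace V]
    (m : ℝ) (hm : 0 ≤ m) :
    (∀ F : U → Z →L[ℝ] V, MemCsm m F →
      BddAbove (Set.range fun x : U => ‖F x‖ / (1 + ‖x‖ ^ m))) ∧
    (∀ F : ℕ → U → Z →L[ℝ] V, (∀ n, MemCsm m (F n)) →
      (∀ ε : ℝ, 0 < ε → ∃ N : ℕ, ∀ p ≥ N, ∀ q ≥ N, ∀ x : U,
        ‖F p x - F q x‖ ≤ ε * (1 + ‖x‖ ^ m)) →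
      ∃ Flim : U → Z →L[ℝ] V, MemCsm m Flim ∧
        ∀ ε : ℝ, 0 < ε → ∃ N : ℕ, ∀ n ≥ N, ∀ x : U,
          ‖F n x - Flim x‖ ≤ ε * (1 + ‖x‖ ^ m)) :=
  stmt0_general m hm
end

section
/- Let A, σ ∈ ℝ with A ≠ 0, let Q_t := σ² ∫_0^t e^{2As} ds = σ²(e^{2At}−1)/(2A) for t ≥ 0, and define the one-dimensional Ornstein–Uhlenbeck semigroup R_t[φ](x) := ∫_ℝ φ(e^{At}x + y) dN(0,Q_t)(y) for φ ∈ C_b(ℝ), where N(0,Q_t) is the centered real Gaussian law of variance Q_t (the Dirac mass at 0 if Q_t = 0). Then the map [0,∞) → C_b(ℝ), t ↦ R_t[sin], is not continuous at any t ≥ 0 with respect to the supremum norm on C_b(ℝ). -/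
/-!
Since `∫ sin (c + y) dN(0, v)(y) = e^{-v/2} sin c`, we have `R_t[sin](x) = c_t sin (e^{At} x)` with
`c_t > 0`: the semigroup only damps `sin` and changes its frequency. Whenever
`e^{At} = e^{As} (1 + 1/(4n))` with `n ∈ ℤ ∖ {0}`, the point `x = 2πn e^{-As}` gives
`sin (e^{As} x) = 0` and `sin (e^{At} x) = 1`, so `‖R_s[sin] - R_t[sin]‖ ≥ c_t`; and such `s ≥ t`
exist arbitrarily close to `t`.
-/

open MeasureTheory

/-- `Q_t = σ²(e^{2At} − 1)/(2A)`. -/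
noncomputable def ouQ (A σ t : ℝ) : ℝ := σ ^ 2 * (Real.exp (2 * A * t) - 1) / (2 * A)

/-- The one-dimensional Ornstein–Uhlenbeck semigroup
`R_t[φ](x) = ∫_ℝ φ(e^{At} x + y) dN(0, Q_t)(y)`. -/
noncomputable def ouR (A σ : ℝ) (t : ℝ) (φ : ℝ → ℝ) (x : ℝ) : ℝ :=
  ∫ y, φ (Real.exp (A * t) * x + y) ∂(ProbabilityTheory.gaussianReal 0 (ouQ A σ t).toNNReal)

open ProbabilityTheory
open scoped NNReal

open Complex in
theorem integral_sin_add_gaussianReal (v : ℝ≥0) (c : ℝ) :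
    ∫ y, Real.sin (c + y) ∂gaussianReal 0 v = Real.exp (-v / 2) * Real.sin c := by
  have hint : Integrable (fun y : ℝ => cexp (c * I) * cexp (1 * y * I)) (gaussianReal 0 v) := by
    refine Integrable.of_bound (by fun_prop) 1 (Filter.Eventually.of_forall fun y => ?_)
    simp [norm_exp_ofReal_mul_I]
  have hsin : ∀ y : ℝ, Real.sin (c + y) = (cexp (c * I) * cexp (1 * y * I)).im := by
    intro y
    rw [← Complex.exp_add, one_mul, ← add_mul, ← ofReal_add, exp_ofReal_mul_I_im]
  calc ∫ y, Real.sin (c + y) ∂gaussianReal 0 v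
      = (cexp (c * I) * charFun (gaussianReal 0 v) 1).im := by
        simp_rw [hsin, charFun_apply_real, ← integral_const_mul]
        exact integral_im hint
    _ = Real.exp (-v / 2) * Real.sin c := by
        rw [charFun_gaussianReal, ← Complex.exp_add]
        simp [Complex.exp_im, neg_div]

theorem ouR_sin (A σ t x : ℝ) :
    ouR A σ t Real.sin x
      = Real.exp (-(ouQ A σ t).toNNReal / 2) * Real.sin (Real.exp (A * t) * x) :=
  integral_sin_add_gaussianReal _ _

open Real in
theorem exists_sin_eq_zero_sin_eq_one {a : ℝ} (ha : a ≠ 0) {n : ℤ} (hn : n ≠ 0) :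
    ∃ x, sin (a * x) = 0 ∧ sin (a * (1 + (4 * n : ℝ)⁻¹) * x) = 1 := by
  refine ⟨2 * π * n / a, ?_, ?_⟩
  · rw [mul_div_cancel₀ _ ha, show 2 * π * n = ((2 * n : ℤ) : ℝ) * π by push_cast; ring]
    exact sin_int_mul_pi _
  · have hn' : (n : ℝ) ≠ 0 := Int.cast_ne_zero.mpr hn
    rw [show a * (1 + (4 * n : ℝ)⁻¹) * (2 * π * n / a) = π / 2 + n * (2 * π) by
      field_simp; ring, sin_add_int_mul_two_pi, sin_pi_div_two]

open Filter Topology in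
theorem exists_int_neg_log_one_add_inv_four_mul_div_mem_Ico {A δ : ℝ} (hA : A ≠ 0) (hδ : 0 < δ) :
    ∃ n : ℤ, n ≠ 0 ∧ 0 < 1 + (4 * n : ℝ)⁻¹ ∧
      -Real.log (1 + (4 * n : ℝ)⁻¹) / A ∈ Set.Ico 0 δ := by
  have hsmall : ∀ l : Filter ℤ, Tendsto (fun n : ℤ => (4 * n : ℝ)⁻¹) l (𝓝 0) →
      ∀ᶠ n : ℤ in l, -Real.log (1 + (4 * n : ℝ)⁻¹) / A < δ := by
    intro l hl
    have hlim := ((tendsto_const_nhds (x := (1 : ℝ))).add hl).log (by norm_num) |>.neg.div_const A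
    simp only [add_zero, Real.log_one, neg_zero, zero_div] at hlim
    exact hlim.eventually (gt_mem_nhds hδ)
  -- `n` must have the sign opposite to `A`, so that the logarithm and `A` have opposite signs.
  rcases hA.lt_or_gt with hA | hA
  · have hl : Tendsto (fun n : ℤ => (4 * n : ℝ)⁻¹) atTop (𝓝 0) :=
      tendsto_inv_atTop_zero.comp (tendsto_intCast_atTop_atTop.const_mul_atTop (by norm_num))
    obtain ⟨n, hn, hnδ⟩ := ((eventually_ge_atTop 1).and (hsmall _ hl)).exists
    have hu : (0 : ℝ) < (4 * n : ℝ)⁻¹ := by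
      have : (1 : ℝ) ≤ n := by exact_mod_cast hn
      positivity
    refine ⟨n, by omega, by linarith, ?_, hnδ⟩
    exact div_nonneg_of_nonpos (neg_nonpos.mpr (Real.log_nonneg (by linarith))) hA.le
  · have hl : Tendsto (fun n : ℤ => (4 * n : ℝ)⁻¹) atBot (𝓝 0) :=
      tendsto_inv_atBot_zero.comp
        ((tendsto_intCast_atBot_iff.mpr tendsto_id).const_mul_atBot (by norm_num))
    obtain ⟨n, hn, hnδ⟩ := ((eventually_le_atBot (-1)).and (hsmall _ hl)).exists
    have h4n : (4 * n : ℝ) ≤ -4 := by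
      have : (n : ℝ) ≤ -1 := by exact_mod_cast hn
      linarith
    have hu : -4⁻¹ ≤ (4 * n : ℝ)⁻¹ ∧ (4 * n : ℝ)⁻¹ < 0 :=
      ⟨neg_inv.trans_le ((inv_le_inv_of_neg (by norm_num) (by linarith)).mpr h4n),
        inv_lt_zero.mpr (by linarith)⟩
    refine ⟨n, by omega, by linarith, ?_, hnδ⟩
    exact div_nonneg (neg_nonneg.mpr (Real.log_nonpos (by linarith) (by linarith))) hA.le

theorem exists_exp_mul_eq_exp_mul_mul_one_add_inv {A : ℝ} (hA : A ≠ 0) (t : ℝ) {δ : ℝ}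
    (hδ : 0 < δ) : ∃ s ∈ Set.Ico t (t + δ), ∃ n : ℤ, n ≠ 0 ∧
      Real.exp (A * t) = Real.exp (A * s) * (1 + (4 * n : ℝ)⁻¹) := by
  obtain ⟨n, hn, hr, hlog, hlogδ⟩ := exists_int_neg_log_one_add_inv_four_mul_div_mem_Ico hA hδ
  refine ⟨t + -Real.log (1 + (4 * n : ℝ)⁻¹) / A, ⟨by linarith, by linarith⟩, n, hn, ?_⟩
  rw [mul_add A t, mul_div_cancel₀ _ hA, Real.exp_add, Real.exp_neg, Real.exp_log hr,
    inv_mul_cancel_right₀ hr.ne']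

/-- for `A ≠ 0`, the map `t ↦ R_t[sin]` from `[0,∞)` to `C_b(ℝ)` is not
continuous at any `t ≥ 0` with respect to the supremum norm (continuity at `t` within
`[0,∞)` being expressed in the usual `ε`-`δ` form for the sup distance). -/
theorem stmt10 (A σ : ℝ) (hA : A ≠ 0) :
    ∀ t : ℝ, 0 ≤ t →
      ¬ (∀ ε : ℝ, 0 < ε → ∃ δ : ℝ, 0 < δ ∧ ∀ s : ℝ, 0 ≤ s → |s - t| < δ →
          ∀ x : ℝ, |ouR A σ s Real.sin x - ouR A σ t Real.sin x| ≤ ε) := by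
  intro t ht hcont
  set c := Real.exp (-(ouQ A σ t).toNNReal / 2)
  have hc : 0 < c := Real.exp_pos _
  obtain ⟨δ, hδ, hclose⟩ := hcont (c / 2) (half_pos hc)
  obtain ⟨s, ⟨hts, hsδ⟩, n, hn, hexp⟩ := exists_exp_mul_eq_exp_mul_mul_one_add_inv hA t hδ
  obtain ⟨x, hsx, htx⟩ := exists_sin_eq_zero_sin_eq_one (Real.exp_ne_zero (A * s)) hn
  have hgap := hclose s (ht.trans hts) (abs_lt.mpr ⟨by linarith, by linarith⟩) x
  rw [ouR_sin, ouR_sin, hexp, hsx, htx, mul_zero, mul_one, zero_sub, abs_neg,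
    abs_of_pos hc] at hgap
  linarith
end

section
/- In the setting of the Ornstein–Uhlenbeck semigroup R_t with G-smoothing (H, Ξ, K separable Hilbert; (e^{tA})_{t≥0} strongly continuous with ‖e^{tA}‖ ≤ M e^{ωt}; σ ∈ L(Ξ,H) with e^{sA}σσ*e^{sA*} trace class for s > 0 and ∫_0^t Tr[e^{sA}σσ*e^{sA*}] ds < ∞; Q_t := ∫_0^t e^{sA}σσ*e^{sA*} ds; N_{Q_t} the centered Gaussian measure with covariance Q_t; G : D(G) ⊆ K → H closed densely defined with e^{tA}G extending to \overline{e^{tA}G} ∈ L(K,H) whose range lies in Q_t^{1/2}(H) for every t > 0; R_t[φ](x) := ∫_H φ(e^{tA}x + y) N_{Q_t}(dy)): for every m ≥ 0, if φ ∈ C¹_m(H) (φ ∈ C_m(H), Fréchet differentiable with Dφ ∈ C_m(H,H)), then for every t > 0, x ∈ H, and k ∈ K, ⟨D^G R_t[φ](x), k⟩_K = ∫_H ⟨Dφ(y + e^{tA}x), \overline{e^{tA}G}\,k⟩_H N_{Q_t}(dy). -/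
/-! The one-dimensional marginals of `N_{Q_t}` are centred Gaussians, so `N_{Q_t}` is a Gaussian
measure and, by Fernique's theorem, has moments of all orders. Hence the polynomial growth of
`Dφ` allows differentiation under the integral sign: `F z := ∫ φ(z + y) N_{Q_t}(dy)` is Fréchet
differentiable with gradient `∫ Dφ(z + y) N_{Q_t}(dy)`. Since
`e^{tA}(x + s G k) = e^{tA} x + s (e^{tA}G)‾ k` and `(e^{tA}G)‾` maps the unit ball of `K` into a
bounded set, the Fréchet remainder of `F` at `e^{tA} x` is uniform along these directions, so
`R_t[φ] = F ∘ e^{tA}` is `G`-differentiable with `D^G R_t[φ](x) = ((e^{tA}G)‾)^* ∇F(e^{tA} x)`. -/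

open Filter MeasureTheory Set
open scoped RealInnerProductSpace ENNReal NNReal

noncomputable section

variable {H Ξ : Type*}
  [NormedAddCommGroup H] [InnerProductSpace ℝ H] [CompleteSpace H]
  [NormedAddCommGroup Ξ] [InnerProductSpace ℝ Ξ] [CompleteSpace Ξ]

/-- `opS T σ s = e^{sA} σ σ* e^{sA*} = (e^{sA}σ)(e^{sA}σ)*`. -/
def opS (T : ℝ → H →L[ℝ] H) (σ : Ξ →L[ℝ] H) (s : ℝ) : H →L[ℝ] H :=
  ((T s).comp σ).comp (ContinuousLinearMap.adjoint ((T s).comp σ))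

/-- The trace (in `[0,∞]`) of an operator w.r.t. the orthonormal basis `b`:
`Tr[S] = Σ_k ⟨S e_k, e_k⟩`. -/
def trB (b : HilbertBasis ℕ ℝ H) (S : H →L[ℝ] H) : ℝ≥0∞ :=
  ∑' i, ENNReal.ofReal ⟪S (b i), b i⟫

/-- `Q_t x = ∫_0^t e^{sA} σ σ* e^{sA*} x ds` (pointwise Bochner integral). -/
def QtFun (T : ℝ → H →L[ℝ] H) (σ : Ξ →L[ℝ] H) (t : ℝ) (x : H) : H :=
  ∫ s in Ioc (0 : ℝ) t, opS T σ s x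

/-- `Tr[Q_t]` w.r.t. the orthonormal basis `b`, in `[0,∞]`. -/
def trQ (b : HilbertBasis ℕ ℝ H) (T : ℝ → H →L[ℝ] H) (σ : Ξ →L[ℝ] H) (t : ℝ) : ℝ≥0∞ :=
  ∑' i, ENNReal.ofReal ⟪QtFun T σ t (b i), b i⟫


/-- `φ ∈ B_m(H)`. -/
def MemBm {H : Type*} [NormedAddCommGroup H] [MeasurableSpace H]
    (m : ℝ) (φ : H → ℝ) : Prop :=
  Measurable φ ∧ ∃ C : ℝ, ∀ x : H, |φ x| ≤ C * (1 + ‖x‖ ^ m)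

/-- the `B_m`-norm `|φ|_{B_m} = sup_x |φ(x)|/(1+‖x‖^m)`. -/
noncomputable def bmNorm {H : Type*} [NormedAddCommGroup H] (m : ℝ) (φ : H → ℝ) : ℝ :=
  ⨆ x : H, |φ x| / (1 + ‖x‖ ^ m)

/-- `f : H → ℝ` is `G`-Fréchet differentiable at `x` with `G`-gradient `p ∈ K`
(identified via Riesz), for a fixed closed densely defined operator
`G : D(G) ⊆ K → H` given by `Gop` on the domain `domG`: the directional difference
quotients along `G k`, `k ∈ D(G)`, converge to `⟪p, k⟫`, uniformly for `k` in the unit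
ball of `K` intersected with `D(G)`. -/
def HasGFrechetGradientAt {K H : Type*}
    [NormedAddCommGroup K] [InnerProductSpace ℝ K]
    [NormedAddCommGroup H] [InnerProductSpace ℝ H]
    (domG : Submodule ℝ K) (Gop : domG →ₗ[ℝ] H)
    (f : H → ℝ) (p : K) (x : H) : Prop :=
  (∀ k : domG, Tendsto (fun s : ℝ => s⁻¹ * (f (x + s • Gop k) - f x))
    (nhdsWithin (0 : ℝ) {0}ᶜ) (nhds ⟪p, (k : K)⟫)) ∧
  ∀ ε : ℝ, 0 < ε → ∃ δ : ℝ, 0 < δ ∧ ∀ s : ℝ, s ≠ 0 → |s| < δ →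
    ∀ k : domG, ‖(k : K)‖ ≤ 1 →
      |s⁻¹ * (f (x + s • Gop k) - f x) - ⟪p, (k : K)⟫| ≤ ε

open ProbabilityTheory

lemma ProbabilityTheory.isGaussian_of_map_inner_eq_gaussianReal {E : Type*}
    [NormedAddCommGroup E] [InnerProductSpace ℝ E] [CompleteSpace E] [MeasurableSpace E]
    [BorelSpace E] {μ : Measure E}
    (h : ∀ ξ : E, ∃ (m : ℝ) (v : ℝ≥0), μ.map (fun y => ⟪y, ξ⟫) = gaussianReal m v) :
    IsGaussian μ := by
  refine isGaussian_of_map_eq_gaussianReal fun L => ?_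
  obtain ⟨m, v, hξ⟩ := h ((InnerProductSpace.toDual ℝ E).symm L)
  refine ⟨m, v, ?_⟩
  convert hξ using 2
  ext y
  rw [real_inner_comm, InnerProductSpace.toDual_symm_apply]

section Growth

variable {X F : Type*} [SeminormedAddCommGroup X] [SeminormedAddCommGroup F]

lemma norm_apply_add_le_of_growth {v : X → F} {C m r : ℝ} (hm : 0 ≤ m)
    (hv : ∀ x, ‖v x‖ ≤ C * (1 + ‖x‖ ^ m)) {x : X} (hx : ‖x‖ ≤ r) (y : X) :
    ‖v (x + y)‖ ≤ C * (1 + (r + ‖y‖) ^ m) := by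
  have hC : 0 ≤ C := nonneg_of_mul_nonneg_left ((norm_nonneg _).trans (hv 0)) (by positivity)
  have hxy : ‖x + y‖ ≤ r + ‖y‖ := (norm_add_le x y).trans (by linarith)
  calc ‖v (x + y)‖ ≤ C * (1 + ‖x + y‖ ^ m) := hv _
    _ ≤ C * (1 + (r + ‖y‖) ^ m) := by gcongr

end Growth

namespace ProbabilityTheory.IsGaussian

section Integrability

variable {E F : Type*} [NormedAddCommGroup E] [NormedSpace ℝ E] [CompleteSpace E]
  [SecondCountableTopology E] [MeasurableSpace E] [BorelSpace E] {μ : Measure E} [IsGaussian μ]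
  [NormedAddCommGroup F]

lemma integrable_add_norm_rpow {r m : ℝ} (hr : 0 ≤ r) (hm : 0 ≤ m) :
    Integrable (fun y => (r + ‖y‖) ^ m) μ := by
  have h := ((memLp_const r).add (memLp_id μ (ENNReal.ofReal m) ENNReal.ofReal_ne_top).norm)
    |>.integrable_norm_rpow'
  simpa [ENNReal.toReal_ofReal hm, Real.norm_of_nonneg (add_nonneg hr (norm_nonneg _))] using h

lemma integrable_growth_bound (C : ℝ) {r m : ℝ} (hr : 0 ≤ r) (hm : 0 ≤ m) :
    Integrable (fun y => C * (1 + (r + ‖y‖) ^ m)) μ :=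
  ((integrable_const 1).add (integrable_add_norm_rpow hr hm)).const_mul C

lemma integrable_comp_add_of_growth {v : E → F} (hv : Continuous v) {C m : ℝ} (hm : 0 ≤ m)
    (hgrowth : ∀ x, ‖v x‖ ≤ C * (1 + ‖x‖ ^ m)) (z : E) :
    Integrable (fun y => v (z + y)) μ :=
  (integrable_growth_bound C (norm_nonneg z) hm).mono' (by fun_prop)
    (ae_of_all _ (norm_apply_add_le_of_growth hm hgrowth le_rfl))

end Integrability

variable {E : Type*} [NormedAddCommGroup E] [InnerProductSpace ℝ E] [CompleteSpace E]
  [SecondCountableTopology E] [MeasurableSpace E] [BorelSpace E] {μ : Measure E} [IsGaussian μ]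

theorem hasGradientAt_integral_comp_add {φ : E → ℝ} {gφ : E → E} {C C' m : ℝ} (hm : 0 ≤ m)
    (hφ : ∀ x, |φ x| ≤ C * (1 + ‖x‖ ^ m)) (hgrad : ∀ x, HasGradientAt φ (gφ x) x)
    (hgc : Continuous gφ) (hg : ∀ x, ‖gφ x‖ ≤ C' * (1 + ‖x‖ ^ m)) (z : E) :
    HasGradientAt (fun z => ∫ y, φ (z + y) ∂μ) (∫ y, gφ (z + y) ∂μ) z := by
  have hφc : Continuous φ :=
    continuous_iff_continuousAt.2 fun x => (hgrad x).differentiableAt.continuousAt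
  have hgint : Integrable (fun y => gφ (z + y)) μ := integrable_comp_add_of_growth hgc hm hg z
  have hbound : ∀ y, ∀ x ∈ Metric.ball z 1,
      ‖innerSL ℝ (gφ (x + y))‖ ≤ C' * (1 + (‖z‖ + 1 + ‖y‖) ^ m) := by
    intro y x hx
    have hx' : ‖x‖ ≤ ‖z‖ + 1 :=
      (norm_le_insert' x z).trans (by rw [← dist_eq_norm]; linarith [Metric.mem_ball.1 hx])
    simpa only [innerSL_apply_norm] using norm_apply_add_le_of_growth hm hg hx' y
  have hderiv := hasFDerivAt_integral_of_dominated_of_fderiv_le (μ := μ)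
    (F := fun x y => φ (x + y)) (F' := fun x y => innerSL ℝ (gφ (x + y)))
    (Metric.ball_mem_nhds z one_pos) (Eventually.of_forall fun x => by fun_prop)
    (integrable_comp_add_of_growth hφc hm (fun x => (Real.norm_eq_abs _).trans_le (hφ x)) z)
    (by fun_prop) (ae_of_all _ hbound)
    (integrable_growth_bound C' (by positivity : 0 ≤ ‖z‖ + 1) hm)
    (ae_of_all _ fun y x _ => (hasFDerivAt_comp_add_right y).2 (hgrad (x + y)).hasFDerivAt)
  rwa [(innerSL ℝ).integral_comp_comm hgint] at hderiv

end ProbabilityTheory.IsGaussian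

lemma HasFDerivAt.exists_forall_abs_slope_sub_le {E : Type*} [NormedAddCommGroup E]
    [NormedSpace ℝ E] {F : E → ℝ} {f' : E →L[ℝ] ℝ} {z : E} (hF : HasFDerivAt F f' z)
    {R ε : ℝ} (hR : 0 ≤ R) (hε : 0 < ε) :
    ∃ δ > 0, ∀ s : ℝ, s ≠ 0 → |s| < δ → ∀ v : E, ‖v‖ ≤ R →
      |s⁻¹ * (F (z + s • v) - F z) - f' v| ≤ ε := by
  obtain ⟨ρ, hρ, hsmall⟩ := Metric.eventually_nhds_iff.1
    ((hasFDerivAt_iff_isLittleO_nhds_zero.1 hF).def (c := ε / (R + 1)) (by positivity))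
  refine ⟨ρ / (R + 1), by positivity, fun s hs hsδ v hv => ?_⟩
  have hsv : ‖s • v‖ ≤ |s| * R := by
    rw [norm_smul, Real.norm_eq_abs]
    gcongr
  have hsρ : |s| * R < ρ := by
    rw [lt_div_iff₀ (by positivity)] at hsδ
    nlinarith [abs_nonneg s]
  have hrem := hsmall (mem_ball_zero_iff.2 (hsv.trans_lt hsρ))
  have hslope : s⁻¹ * (F (z + s • v) - F z) - f' v
      = s⁻¹ * (F (z + s • v) - F z - f' (s • v)) := by
    rw [map_smul, smul_eq_mul]
    field_simp
  calc |s⁻¹ * (F (z + s • v) - F z) - f' v|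
      = |s|⁻¹ * ‖F (z + s • v) - F z - f' (s • v)‖ := by
        rw [hslope, abs_mul, abs_inv, Real.norm_eq_abs]
    _ ≤ |s|⁻¹ * (ε / (R + 1) * (|s| * R)) := by gcongr; exact hrem.trans (by gcongr)
    _ = ε * (R / (R + 1)) := by field_simp
    _ ≤ ε := mul_le_of_le_one_right hε.le ((div_le_one (by positivity)).2 (by linarith))

theorem HasGradientAt.hasGFrechetGradientAt_comp {K E V : Type*}
    [NormedAddCommGroup K] [InnerProductSpace ℝ K] [CompleteSpace K]
    [NormedAddCommGroup E] [InnerProductSpace ℝ E]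
    [NormedAddCommGroup V] [InnerProductSpace ℝ V] [CompleteSpace V]
    {domG : Submodule ℝ K} {Gop : domG →ₗ[ℝ] E} {F : V → ℝ} {g : V} {L : E →ₗ[ℝ] V}
    {B : K →L[ℝ] V} {x : E} (hF : HasGradientAt F g (L x))
    (hB : ∀ k : domG, B k = L (Gop k)) :
    HasGFrechetGradientAt domG Gop (fun x' => F (L x')) (ContinuousLinearMap.adjoint B g) x := by
  have hL : ∀ (k : domG) (s : ℝ), L (x + s • Gop k) = L x + s • B k := by simp [hB]
  have hadj : ∀ k : K,
      ⟪ContinuousLinearMap.adjoint B g, k⟫ = InnerProductSpace.toDual ℝ V g (B k) :=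
    fun k => ContinuousLinearMap.adjoint_inner_left B k g
  constructor
  · intro k
    rw [Metric.tendsto_nhdsWithin_nhds]
    intro ε hε
    obtain ⟨δ, hδ, hslope⟩ := hF.hasFDerivAt.exists_forall_abs_slope_sub_le
      (norm_nonneg (B k)) (half_pos hε)
    refine ⟨δ, hδ, fun s hs hsδ => ?_⟩
    beta_reduce
    rw [hL, Real.dist_eq, hadj]
    exact (hslope s hs (by simpa using hsδ) _ le_rfl).trans_lt (half_lt_self hε)
  · intro ε hε
    obtain ⟨δ, hδ, hslope⟩ := hF.hasFDerivAt.exists_forall_abs_slope_sub_le (norm_nonneg B) hε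
    refine ⟨δ, hδ, fun s hs hsδ k hk => ?_⟩
    beta_reduce
    rw [hL, hadj]
    exact hslope s hs hsδ _ ((B.le_opNorm_of_le hk).trans_eq (mul_one _))

theorem stmt16_general {H Ξ K : Type*}
    [NormedAddCommGroup H] [InnerProductSpace ℝ H] [CompleteSpace H]
    [TopologicalSpace.SeparableSpace H] [MeasurableSpace H] [BorelSpace H]
    [NormedAddCommGroup Ξ] [InnerProductSpace ℝ Ξ] [CompleteSpace Ξ]
    [NormedAddCommGroup K] [InnerProductSpace ℝ K] [CompleteSpace K]
    (T : ℝ → H →L[ℝ] H)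
    (σ : Ξ →L[ℝ] H)
    -- the Gaussian measures N t = N_{Q_t}, t > 0
    (N : ℝ → Measure H)
    (hNgauss : ∀ t : ℝ, 0 < t → ∀ ξ : H,
      (N t).map (fun y : H => ⟪y, ξ⟫) =
        ProbabilityTheory.gaussianReal 0
          (Real.toNNReal (∫ s in Ioc (0 : ℝ) t, ⟪opS T σ s ξ, ξ⟫)))
    -- G : D(G) ⊆ K → H closed and densely defined
    (domG : Submodule ℝ K) (Gop : domG →ₗ[ℝ] H)
    -- e^{tA}G extends to a bounded operator Ebar t
    (Ebar : ℝ → K →L[ℝ] H)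
    (hEbar : ∀ t : ℝ, 0 < t → ∀ k : domG, Ebar t (k : K) = T t (Gop k)) :
    ∀ m : ℝ, 0 ≤ m → ∀ (φ : H → ℝ) (gφ : H → H),
      (Continuous φ ∧ ∃ C : ℝ, ∀ x : H, |φ x| ≤ C * (1 + ‖x‖ ^ m)) →
      (∀ x : H, HasGradientAt φ (gφ x) x) →
      (Continuous gφ ∧ ∃ C : ℝ, ∀ x : H, ‖gφ x‖ ≤ C * (1 + ‖x‖ ^ m)) →
      ∀ t : ℝ, 0 < t →
        ∃ D : H → K,
          (∀ x : H, HasGFrechetGradientAt domG Gop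
            (fun x' : H => ∫ y, φ (T t x' + y) ∂(N t)) (D x) x) ∧
          ∀ (x : H) (k : K),
            ⟪D x, k⟫ = ∫ y, ⟪gφ (y + T t x), Ebar t k⟫ ∂(N t) := by
  intro m hm φ gφ ⟨_, Cφ, hφ⟩ hgrad ⟨hgc, Cg, hg⟩ t ht
  have : IsGaussian (N t) :=
    isGaussian_of_map_inner_eq_gaussianReal fun ξ => ⟨0, _, hNgauss t ht ξ⟩
  have : SecondCountableTopology H := UniformSpace.secondCountable_of_separable H
  refine ⟨fun x => ContinuousLinearMap.adjoint (Ebar t) (∫ y, gφ (T t x + y) ∂(N t)),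
    fun x => ?_, fun x k => ?_⟩
  · exact (IsGaussian.hasGradientAt_integral_comp_add hm hφ hgrad hgc hg (T t x)
      ).hasGFrechetGradientAt_comp (L := (T t : H →ₗ[ℝ] H)) (hEbar t ht)
  · rw [ContinuousLinearMap.adjoint_inner_left, real_inner_comm,
      ← integral_inner (IsGaussian.integrable_comp_add_of_growth hgc hm hg (T t x))]
    simp_rw [add_comm (T t x), real_inner_comm]

/-- in the Ornstein–Uhlenbeck setting with `G`-smoothing, if
`φ ∈ C¹_m(H)` (i.e. `φ` is continuous with growth of order `m`, Fréchet differentiable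
with gradient `gφ : H → H` continuous and of growth of order `m`), then for every
`t > 0`, `x ∈ H` and `k ∈ K`,
`⟨D^G R_t[φ](x), k⟩_K = ∫_H ⟨Dφ(y + e^{tA}x), (e^{tA}G)k⟩_H dN_{Q_t}(y)`. -/
theorem stmt16 {H Ξ K : Type*}
    [NormedAddCommGroup H] [InnerProductSpace ℝ H] [CompleteSpace H]
    [TopologicalSpace.SeparableSpace H] [MeasurableSpace H] [BorelSpace H]
    [NormedAddCommGroup Ξ] [InnerProductSpace ℝ Ξ] [CompleteSpace Ξ]
    [TopologicalSpace.SeparableSpace Ξ]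
    [NormedAddCommGroup K] [InnerProductSpace ℝ K] [CompleteSpace K]
    [TopologicalSpace.SeparableSpace K]
    (b : HilbertBasis ℕ ℝ H)
    (T : ℝ → H →L[ℝ] H)
    (hT0 : T 0 = ContinuousLinearMap.id ℝ H)
    (hTsg : ∀ s t : ℝ, 0 ≤ s → 0 ≤ t → T (s + t) = (T s).comp (T t))
    (hTcont : ∀ x : H, ContinuousOn (fun t : ℝ => T t x) (Ici 0))
    (M ω : ℝ) (hM : 1 ≤ M)
    (hTbd : ∀ t : ℝ, 0 ≤ t → ‖T t‖ ≤ M * Real.exp (ω * t))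
    (σ : Ξ →L[ℝ] H)
    (htrace : ∀ s : ℝ, 0 < s → trB b (opS T σ s) < ⊤)
    (htraceint : ∀ t : ℝ, 0 ≤ t → (∫⁻ s in Ioc (0 : ℝ) t, trB b (opS T σ s)) < ⊤)
    -- the Gaussian measures N t = N_{Q_t}, t > 0
    (N : ℝ → Measure H)
    (hNprob : ∀ t : ℝ, 0 < t → IsProbabilityMeasure (N t))
    (hNgauss : ∀ t : ℝ, 0 < t → ∀ ξ : H,
      (N t).map (fun y : H => ⟪y, ξ⟫) =
        ProbabilityTheory.gaussianReal 0
          (Real.toNNReal (∫ s in Ioc (0 : ℝ) t, ⟪opS T σ s ξ, ξ⟫)))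
    -- G : D(G) ⊆ K → H closed and densely defined
    (domG : Submodule ℝ K) (Gop : domG →ₗ[ℝ] H)
    (hdense : Dense (domG : Set K))
    (hclosed : IsClosed {p : K × H | ∃ h : p.1 ∈ domG, Gop ⟨p.1, h⟩ = p.2})
    -- e^{tA}G extends to a bounded operator Ebar t
    (Ebar : ℝ → K →L[ℝ] H)
    (hEbar : ∀ t : ℝ, 0 < t → ∀ k : domG, Ebar t (k : K) = T t (Gop k))
    -- sqrtQ t is the nonnegative self-adjoint square root Q_t^{1/2} of Q_t
    (sqrtQ : ℝ → H →L[ℝ] H)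
    (hsqrtQsa : ∀ t : ℝ, 0 < t → ∀ ξ η : H, ⟪sqrtQ t ξ, η⟫ = ⟪ξ, sqrtQ t η⟫)
    (hsqrtQpos : ∀ t : ℝ, 0 < t → ∀ ξ : H, 0 ≤ ⟪sqrtQ t ξ, ξ⟫)
    (hsqrtQsq : ∀ t : ℝ, 0 < t → ∀ ξ η : H,
      ⟪sqrtQ t (sqrtQ t ξ), η⟫ = ∫ s in Ioc (0 : ℝ) t, ⟪opS T σ s ξ, η⟫)
    -- range(Ebar t) ⊆ Q_t^{1/2}(H), and Γ t = Q_t^{-1/2} Ebar t (minimal-norm section)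
    (Γ : ℝ → K →L[ℝ] H)
    (hΓ : ∀ t : ℝ, 0 < t → ∀ k : K, sqrtQ t (Γ t k) = Ebar t k)
    (hΓmin : ∀ t : ℝ, 0 < t → ∀ k : K, ∀ h : H, sqrtQ t h = Ebar t k → ‖Γ t k‖ ≤ ‖h‖) :
    ∀ m : ℝ, 0 ≤ m → ∀ (φ : H → ℝ) (gφ : H → H),
      (Continuous φ ∧ ∃ C : ℝ, ∀ x : H, |φ x| ≤ C * (1 + ‖x‖ ^ m)) →
      (∀ x : H, HasGradientAt φ (gφ x) x) →
      (Continuous gφ ∧ ∃ C : ℝ, ∀ x : H, ‖gφ x‖ ≤ C * (1 + ‖x‖ ^ m)) →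
      ∀ t : ℝ, 0 < t →
        ∃ D : H → K,
          (∀ x : H, HasGFrechetGradientAt domG Gop
            (fun x' : H => ∫ y, φ (T t x' + y) ∂(N t)) (D x) x) ∧
          ∀ (x : H) (k : K),
            ⟪D x, k⟫ = ∫ y, ⟪gφ (y + T t x), Ebar t k⟫ ∂(N t) :=
  stmt16_general T σ N hNgauss domG Gop Ebar hEbar
end
end
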